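/- The pair of functors p : Set → 𝑏𝑏M, p(X) = (X,(I)_X), and b : 𝑏𝑏M → Set, b(X,(A_x)) = Σ_{x∈X} M(I, A_x), forms an adjunction p ⊣ b; consequently ! = p ∘ b is a comonad on 𝑏𝑏M. -/

import Mathlib

open CategoryTheory

universe v u

/-- Objects of the coproduct completion 𝑏𝑏M of a category M: set-indexed
families of objects of M. -/
structure FamObj (C : Type u) [Category.{v} C] : Type (max (v+1) u) where
  idx : Type v
  fam : idx → C

variable {C : Type u} [Category.{v} C]

/-- Morphisms of the coproduct completion: an index function together with a
family of M-morphisms. -/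
@[ext]
structure FamHom (A B : FamObj C) : Type v where
  f₀ : A.idx → B.idx
  f : ∀ x : A.idx, A.fam x ⟶ B.fam (f₀ x)

/-- Identity morphism (id_X, (id_{A_x})). -/
def FamHom.id (A : FamObj C) : FamHom A A := ⟨fun x => x, fun x => 𝟙 (A.fam x)⟩

/-- Composition (g₀∘f₀, (g_{f₀(x)} ∘ f_x)). -/
def FamHom.comp {A B D : FamObj C} (f : FamHom A B) (g : FamHom B D) : FamHom A D :=
  ⟨fun x => g.f₀ (f.f₀ x), fun x => f.f x ≫ g.f (f.f₀ x)⟩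

instance famCategory (C : Type u) [Category.{v} C] : Category (FamObj C) where
  Hom := FamHom
  id := FamHom.id
  comp := FamHom.comp
  id_comp f := by
    apply FamHom.ext
    · rfl
    · apply heq_of_eq; funext x; simp [FamHom.comp, FamHom.id]
  comp_id f := by
    apply FamHom.ext
    · rfl
    · apply heq_of_eq; funext x; simp [FamHom.comp, FamHom.id]
  assoc f g h := by
    apply FamHom.ext
    · rfl
    · apply heq_of_eq; funext x; simp [FamHom.comp]

open MonoidalCategory

/-- The functor p : Set → 𝑏𝑏M, p(X) = (X, (I)_X), sending f to (f, (id_I)). -/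
def pFunctor (C : Type u) [Category.{v} C] [MonoidalCategory C] :
    Type v ⥤ FamObj C where
  obj X := ⟨X, fun _ => 𝟙_ C⟩
  map f := ⟨f, fun _ => 𝟙 (𝟙_ C)⟩
  map_id X := by
    apply FamHom.ext
    · rfl
    · rfl
  map_comp f g := by
    apply FamHom.ext
    · rfl
    · apply heq_of_eq; funext x
      show _ = 𝟙 (𝟙_ C) ≫ 𝟙 (𝟙_ C)
      simp [famCategory, FamHom.comp]

/-- The functor b : 𝑏𝑏M → Set, b(X,(A_x)) = Σ_{x∈X} M(I, A_x). -/
def bFunctor (C : Type u) [Category.{v} C] [MonoidalCategory C] :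
    FamObj C ⥤ Type v where
  obj A := Σ x : A.idx, (𝟙_ C ⟶ A.fam x)
  map f := TypeCat.ofHom fun p => ⟨f.f₀ p.1, p.2 ≫ f.f p.1⟩
  map_id A := by
    ext p
    · rfl
    · apply heq_of_eq
      show p.2 ≫ 𝟙 _ = p.2
      simp [famCategory, FamHom.id]
  map_comp f g := by
    ext p
    · rfl
    · apply heq_of_eq
      show p.2 ≫ (f.f p.1 ≫ g.f (f.f₀ p.1)) = (p.2 ≫ f.f p.1) ≫ g.f (f.f₀ p.1)
      simp [famCategory, FamHom.comp]

/-- A morphism out of `p X` is a choice, for each `x : X`, of an index of `A` and a global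
element `𝟙_ C ⟶ A.fam _`, i.e. exactly a function `X → b A`; the bijection is definitional
in both directions, so all the adjunction laws hold by `rfl` up to `𝟙 _ ≫ _ = _`. -/
def pbHomEquiv (C : Type u) [Category.{v} C] [MonoidalCategory C] (X : Type v)
    (A : FamObj C) : ((pFunctor C).obj X ⟶ A) ≃ (X ⟶ (bFunctor C).obj A) where
  toFun g := TypeCat.ofHom fun x => ⟨g.f₀ x, g.f x⟩
  invFun h := ⟨fun x => (h x).1, fun x => (h x).2⟩
  left_inv _ := rfl
  right_inv _ := rfl

def pbAdjunction (C : Type u) [Category.{v} C] [MonoidalCategory C] :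
    pFunctor C ⊣ bFunctor C :=
  Adjunction.mkOfHomEquiv
    { homEquiv := pbHomEquiv C
      homEquiv_naturality_left_symm := fun _ _ => by
        apply FamHom.ext
        · rfl
        · exact heq_of_eq (funext fun _ => (Category.id_comp _).symm)
      homEquiv_naturality_right := fun _ _ => rfl }

/-- p ⊣ b, and consequently ! = p ∘ b is a comonad on 𝑏𝑏M. -/
theorem p_adj_b (C : Type u) [Category.{v} C] [MonoidalCategory C] :
    ∃ adj : pFunctor C ⊣ bFunctor C,
      adj.toComonad.toFunctor = bFunctor C ⋙ pFunctor C :=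
  ⟨pbAdjunction C, rfl⟩
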